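/- Let 7/3 < p < 5 and define g(λ) = 4λ^{3(p−1)/2} − 3(p−1)λ² + 3p − 7 for λ > 0. Then g(1) = g'(1) = 0, g is strictly decreasing on [0,1), and for every δ ∈ (0,1) there exists a constant c > 0 such that g(λ) ≥ c(1−λ)² for all λ ∈ [δ, 1]. -/

import Mathlib

open Real

noncomputable section

/-- The coefficient function `g(λ) = 4λ^{3(p−1)/2} − 3(p−1)λ² + 3p − 7` appearing in
the fibering-map computation. -/
def g (p lam : ℝ) : ℝ := 4 * lam ^ (3*(p - 1)/2) - 3*(p - 1) * lam ^ 2 + (3*p - 7)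

/-!
With `e = 3(p−1)/2` one has `g(λ) = 4λ^e − 2eλ² + 2e − 4` and `g'(λ) = 4e(λ^{e−1} − λ)`,
which is negative on `(0,1)` as soon as `e − 1 > 1`, i.e. `p > 7/3`. For the quadratic lower
bound, `λ − λ^{e−1} = λ(1 − λ^{e−2}) ≥ δ·min(1, e−2)·(1 − λ)` on `[δ,1]` by Bernoulli's
inequality, so `g − c(1 − λ)²` is antitone on `[δ,1]` for `c = 2eδ·min(1, e−2)`, and it
vanishes at `λ = 1`.
-/

open Set

lemma min_one_mul_one_sub_le_one_sub_rpow {s x : ℝ} (hs : 0 ≤ s) (hx₀ : 0 ≤ x) (hx₁ : x ≤ 1) :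
    min 1 s * (1 - x) ≤ 1 - x ^ s := by
  rcases le_total s 1 with hs₁ | hs₁
  · have bernoulli := rpow_one_add_le_one_add_mul_self (s := x - 1) (by linarith) hs hs₁
    rw [add_sub_cancel] at bernoulli
    rw [min_eq_right hs₁]
    linarith
  · rw [min_eq_left hs₁]
    linarith [rpow_le_self_of_le_one hx₀ hx₁ hs₁]

lemma mul_min_one_mul_one_sub_le_sub_rpow {s x : ℝ} (hs : 0 ≤ s) (hx₀ : 0 < x) (hx₁ : x ≤ 1) :
    x * (min 1 s * (1 - x)) ≤ x - x ^ (s + 1) := by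
  rw [rpow_add_one hx₀.ne', mul_comm (x ^ s) x, ← mul_one_sub]
  exact mul_le_mul_of_nonneg_left (min_one_mul_one_sub_le_one_sub_rpow hs hx₀.le hx₁) hx₀.le

lemma g_one (p : ℝ) : g p 1 = 0 := by
  simp only [g, one_rpow, one_pow]
  ring

lemma hasDerivAt_g (p : ℝ) {x : ℝ} (hx : x ≠ 0) :
    HasDerivAt (g p) (6*(p - 1) * (x ^ (3*(p - 1)/2 - 1) - x)) x := by
  have h := (((hasDerivAt_rpow_const (p := 3*(p - 1)/2) (Or.inl hx)).const_mul 4).sub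
    ((hasDerivAt_pow 2 x).const_mul (3*(p - 1)))).add_const (3*p - 7)
  exact h.congr_deriv (by ring)

lemma deriv_g_one (p : ℝ) : deriv (g p) 1 = 0 := by
  rw [(hasDerivAt_g p one_ne_zero).deriv, one_rpow, sub_self, mul_zero]

lemma continuous_g {p : ℝ} (hp : 1 ≤ p) : Continuous (g p) :=
  (((continuous_id.rpow_const fun _ => Or.inr (by linarith)).const_mul 4).sub
    ((continuous_pow 2).const_mul (3*(p - 1)))).add continuous_const

lemma strictAntiOn_g {p : ℝ} (hp : 7/3 < p) : StrictAntiOn (g p) (Ico 0 1) := by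
  refine strictAntiOn_of_hasDerivWithinAt_neg (convex_Ico 0 1)
    (f' := fun x => 6*(p - 1) * (x ^ (3*(p - 1)/2 - 1) - x))
    (continuous_g (by linarith)).continuousOn (fun x hx => ?_) fun x hx => ?_ <;>
    rw [interior_Ico] at hx
  · exact (hasDerivAt_g p hx.1.ne').hasDerivWithinAt
  have : x ^ (3*(p - 1)/2 - 1) < x := rpow_lt_self_of_lt_one hx.1 hx.2 (by linarith)
  exact mul_neg_of_pos_of_neg (by linarith) (by linarith)

lemma exists_pos_mul_sq_le_g {p δ : ℝ} (hp : 7/3 < p) (hδ : 0 < δ) :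
    ∃ c > 0, ∀ x ∈ Icc δ 1, c * (1 - x) ^ 2 ≤ g p x := by
  set m := min 1 (3*(p - 1)/2 - 2)
  have hm : 0 < m := lt_min one_pos (by linarith)
  refine ⟨3*(p - 1) * δ * m, mul_pos (mul_pos (by linarith) hδ) hm, fun x hx => ?_⟩
  have hanti : AntitoneOn (fun y => g p y - 3*(p - 1) * δ * m * (1 - y) ^ 2) (Icc δ 1) := by
    refine antitoneOn_of_hasDerivWithinAt_nonpos (convex_Icc δ 1)
      (f' := fun y => 6*(p - 1) * (y ^ (3*(p - 1)/2 - 1) - y) + 6*(p - 1) * δ * m * (1 - y))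
      ((continuous_g (by linarith)).sub
        (continuous_const.mul ((continuous_const.sub continuous_id).pow 2))).continuousOn
      (fun y hy => ?_) fun y hy => ?_ <;>
      rw [interior_Icc] at hy
    · refine HasDerivAt.hasDerivWithinAt ?_
      have hsq := ((hasDerivAt_id y).const_sub 1).pow 2 |>.const_mul (3*(p - 1) * δ * m)
      exact ((hasDerivAt_g p (hδ.trans hy.1).ne').sub hsq).congr_deriv (by simp only [id]; ring)
    · have key := mul_min_one_mul_one_sub_le_sub_rpow (s := 3*(p - 1)/2 - 2) (by linarith)
        (hδ.trans hy.1) hy.2.le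
      rw [show 3*(p - 1)/2 - 2 + 1 = 3*(p - 1)/2 - 1 by ring] at key
      have hδm : δ * (m * (1 - y)) ≤ y * (m * (1 - y)) :=
        mul_le_mul_of_nonneg_right hy.1.le (mul_nonneg hm.le (by linarith [hy.2]))
      have hp₀ : 0 ≤ 6*(p - 1) := by linarith
      linarith [mul_le_mul_of_nonneg_left (hδm.trans key) hp₀]
  have := hanti hx ⟨hx.1.trans hx.2, le_rfl⟩ hx.2
  simpa [g_one] using this

theorem g_properties_general (p : ℝ) (hp : 7/3 < p) :
    g p 1 = 0 ∧
    deriv (g p) 1 = 0 ∧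
    StrictAntiOn (g p) (Set.Ico (0:ℝ) 1) ∧
    ∀ δ ∈ Set.Ioo (0:ℝ) 1, ∃ c > (0:ℝ), ∀ lam ∈ Set.Icc δ 1,
      c * (1 - lam) ^ 2 ≤ g p lam :=
  ⟨g_one p, deriv_g_one p, strictAntiOn_g hp, fun _ hδ => exists_pos_mul_sq_le_g hp hδ.1⟩

/-- For `7/3 < p < 5`: `g(1) = g'(1) = 0`, `g` is strictly decreasing on `[0,1)`, and
for every `δ ∈ (0,1)` there is `c > 0` with `g(λ) ≥ c(1−λ)²` on `[δ,1]`. -/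
theorem g_properties (p : ℝ) (hp : 7/3 < p) (hp' : p < 5) :
    g p 1 = 0 ∧
    deriv (g p) 1 = 0 ∧
    StrictAntiOn (g p) (Set.Ico (0:ℝ) 1) ∧
    ∀ δ ∈ Set.Ioo (0:ℝ) 1, ∃ c > (0:ℝ), ∀ lam ∈ Set.Icc δ 1,
      c * (1 - lam) ^ 2 ≤ g p lam :=
  g_properties_general p hp
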